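/- The dihedral angle is not determined by pairwise distances to the central atom alone: there exist two 4-tuples (x_l, x_i, x_j, x_k) and (x_l', x_i', x_j', x_k') in ℝ³ with ‖x_l - x_i‖ = ‖x_l' - x_i'‖, ‖x_l - x_j‖ = ‖x_l' - x_j'‖, ‖x_l - x_k‖ = ‖x_l' - x_k'‖, but with different dihedral angle cosines (as defined via the normalized cross-product formula). -/

import Mathlib

open Matrix

infixl:74 " ×₃ " => crossProduct

/-- Euclidean norm of a vector in `ℝ³`. -/
noncomputable def norm3 (v : Fin 3 → ℝ) : ℝ := Real.sqrt (v ⬝ᵥ v)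

/-- The cosine of the dihedral angle of a 4-body system. -/
noncomputable def dihedralCos (xl xi xj xk : Fin 3 → ℝ) : ℝ :=
  (((xl - xi) ×₃ (xl - xj)) ⬝ᵥ ((xl - xi) ×₃ (xl - xk))) /
    (norm3 ((xl - xi) ×₃ (xl - xj)) * norm3 ((xl - xi) ×₃ (xl - xk)))

/-- The dihedral angle is not determined by the pairwise distances to the central atom. -/
theorem dihedral_not_determined_by_distances :
    ∃ xl xi xj xk xl' xi' xj' xk' : Fin 3 → ℝ,
      (xl - xi) ×₃ (xl - xj) ≠ 0 ∧ (xl - xi) ×₃ (xl - xk) ≠ 0 ∧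
      (xl' - xi') ×₃ (xl' - xj') ≠ 0 ∧ (xl' - xi') ×₃ (xl' - xk') ≠ 0 ∧
      norm3 (xl - xi) = norm3 (xl' - xi') ∧
      norm3 (xl - xj) = norm3 (xl' - xj') ∧
      norm3 (xl - xk) = norm3 (xl' - xk') ∧
      dihedralCos xl xi xj xk ≠ dihedralCos xl' xi' xj' xk' := by
  refine ⟨0, ![-1,0,0], ![0,-1,0], ![0,0,-1], 0, ![-1,0,0], ![0,-1,0], ![0,-1,0],
    ?_, ?_, ?_, ?_, ?_, ?_, ?_, ?_⟩ <;>
  simp [dihedralCos, norm3, crossProduct, dotProduct, Fin.sum_univ_three,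
    funext_iff, Fin.forall_fin_succ]
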